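/- For every positive integer k, the number of cyclic subgroups of (ℤ/kℤ)² of order exactly k equals the Dedekind psi function ψ(k) = k · ∏_{p prime, p ∣ k} (1 + 1/p). -/

import Mathlib

/-!
Every cyclic subgroup of order `k` has exactly `φ k` generators, so `φ k` times the number of
such subgroups is the number of elements of order `k` in `(ℤ/kℤ)²`. For `n ∣ k` exactly `n²`
elements of `(ℤ/kℤ)²` are killed by `n`, so Möbius inversion counts the elements of order `k`
as `∑_{d ∣ k} μ(d) (k/d)² = k² ∏_{p ∣ k} (1 - 1/p²)`, and dividing by
`φ k = k ∏_{p ∣ k} (1 - 1/p)` leaves `k ∏_{p ∣ k} (1 + 1/p)`.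
-/

open Finset AddSubgroup ArithmeticFunction UniqueFactorizationMonoid
open scoped ArithmeticFunction.Moebius Nat

namespace ArithmeticFunction

/-- `μ` vanishes off the squarefree divisors of `n`, which are the divisors of its radical. -/
theorem IsMultiplicative.prodPrimeFactors_one_sub {R : Type*} [CommRing R]
    {f : ArithmeticFunction R} (hf : f.IsMultiplicative) {n : ℕ} (hn : n ≠ 0) :
    ∏ p ∈ n.primeFactors, (1 - f p) = ∑ d ∈ n.divisors, (μ d : R) * f d := by
  rw [← Nat.primeFactors_radical, hf.prodPrimeFactors_one_sub_of_squarefree _ squarefree_radical]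
  refine sum_subset (Nat.divisors_subset_of_dvd hn radical_dvd_self) fun d hdn hdr => ?_
  have hd : d ≠ 0 := Nat.ne_of_gt (Nat.pos_of_mem_divisors hdn)
  have hsq : ¬Squarefree d := fun hsq => hdr <| Nat.mem_divisors.mpr
    ⟨(dvd_radical_iff ((isRadical_iff_squarefree_of_ne_zero hd).mpr hsq) hn).mpr
      (Nat.dvd_of_mem_divisors hdn), radical_ne_zero⟩
  rw [moebius_eq_zero_of_not_squarefree hsq, Int.cast_zero, zero_mul]

def invSq : ArithmeticFunction ℚ := ⟨fun d => ((d : ℚ) ^ 2)⁻¹, by simp⟩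

theorem invSq_apply (d : ℕ) : invSq d = ((d : ℚ) ^ 2)⁻¹ := rfl

theorem isMultiplicative_invSq : invSq.IsMultiplicative :=
  ⟨by simp [invSq_apply], fun {m n} _ => by
    simp only [invSq_apply]
    push_cast
    rw [mul_pow, mul_inv]⟩

end ArithmeticFunction

theorem sum_divisorsAntidiagonal_moebius_mul_sq {n : ℕ} (hn : n ≠ 0) :
    ∑ x ∈ n.divisorsAntidiagonal, (μ x.1 : ℚ) * (x.2 : ℚ) ^ 2
      = (n : ℚ) ^ 2 * ∏ p ∈ n.primeFactors, (1 - ((p : ℚ) ^ 2)⁻¹) := by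
  have h := isMultiplicative_invSq.prodPrimeFactors_one_sub hn
  simp only [invSq_apply] at h
  rw [h, mul_sum, Nat.sum_divisorsAntidiagonal (fun d e => (μ d : ℚ) * (e : ℚ) ^ 2)]
  refine sum_congr rfl fun d hd => ?_
  have hd0 : (d : ℚ) ≠ 0 := Nat.cast_ne_zero.mpr (Nat.ne_of_gt (Nat.pos_of_mem_divisors hd))
  rw [Nat.cast_div (Nat.dvd_of_mem_divisors hd) hd0]
  field_simp

theorem Nat.totient_mul_dedekindPsi (n : ℕ) :
    (φ n : ℚ) * (n * ∏ p ∈ n.primeFactors, (1 + 1 / (p : ℚ)))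
      = (n : ℚ) ^ 2 * ∏ p ∈ n.primeFactors, (1 - ((p : ℚ) ^ 2)⁻¹) := by
  rw [Nat.totient_eq_mul_prod_factors, mul_mul_mul_comm, ← prod_mul_distrib, ← sq]
  congr 1
  refine prod_congr rfl fun p _ => ?_
  ring

section Torsion

variable {G H : Type*} [Fintype G] [DecidableEq G] [Fintype H] [DecidableEq H]

theorem card_prod_nsmul_eq_zero [AddMonoid G] [AddMonoid H] (n : ℕ) :
    #{v : G × H | n • v = 0} = #{x : G | n • x = 0} * #{y : H | n • y = 0} := by
  rw [← card_product, ← filter_product]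
  simp only [Prod.ext_iff, Prod.smul_fst, Prod.smul_snd, Prod.fst_zero, Prod.snd_zero,
    univ_product_univ]

theorem IsAddCyclic.card_nsmul_eq_zero_of_dvd [AddGroup G] [IsAddCyclic G] {d : ℕ}
    (hd : d ∣ Fintype.card G) : #{x : G | d • x = 0} = d := by
  have hd0 : d ≠ 0 := ne_of_gt (Nat.pos_of_dvd_of_pos hd Fintype.card_pos)
  rw [← sum_card_addOrderOf_eq_card_nsmul_eq_zero hd0]
  conv_rhs => rw [← Nat.sum_totient d]
  exact sum_congr rfl fun m hm =>
    IsAddCyclic.card_addOrderOf_eq_totient ((Nat.dvd_of_mem_divisors hm).trans hd)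

theorem IsAddCyclic.card_prod_addOrderOf_eq_card [AddGroup G] [IsAddCyclic G] :
    (#{v : G × G | addOrderOf v = Fintype.card G} : ℚ)
      = (Fintype.card G : ℚ) ^ 2 *
          ∏ p ∈ (Fintype.card G).primeFactors, (1 - ((p : ℚ) ^ 2)⁻¹) := by
  set k := Fintype.card G
  have hdiv : ∀ n > 0, n ∈ {n | n ∣ k} →
      ∑ m ∈ n.divisors, (#{v : G × G | addOrderOf v = m} : ℚ) = (n : ℚ) ^ 2 := by
    intro n hn hnk
    rw [← Nat.cast_sum, sum_card_addOrderOf_eq_card_nsmul_eq_zero hn.ne', card_prod_nsmul_eq_zero,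
      IsAddCyclic.card_nsmul_eq_zero_of_dvd hnk, Nat.cast_mul, sq]
  rw [← sum_divisorsAntidiagonal_moebius_mul_sq Fintype.card_ne_zero]
  exact ((sum_eq_iff_sum_mul_moebius_eq_on {n | n ∣ k} fun _ _ => dvd_trans).mp hdiv k
    Fintype.card_pos dvd_rfl).symm

end Torsion

section CyclicSubgroups

variable {A : Type*} [AddGroup A] [Finite A]

theorem AddSubgroup.card_generators_eq_totient (H : AddSubgroup A) [IsAddCyclic H] :
    Nat.card {g : A // zmultiples g = H} = φ (Nat.card H) := by
  classical
  have : Fintype H := Fintype.ofFinite H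
  let e : {g : A // zmultiples g = H} ≃ {h : H // addOrderOf h = Nat.card H} :=
    { toFun := fun g => ⟨⟨g, g.2.le (mem_zmultiples g.1)⟩, by
        rw [addOrderOf_mk, ← Nat.card_zmultiples, g.2]⟩
      invFun := fun h => ⟨h, eq_of_le_of_card_ge (zmultiples_le.mpr h.1.2) (by
        rw [Nat.card_zmultiples, addOrderOf_coe, h.2])⟩
      left_inv := fun _ => rfl
      right_inv := fun _ => rfl }
  rw [Nat.card_congr e, Nat.card_eq_fintype_card, Fintype.card_subtype, Nat.card_eq_fintype_card]
  exact IsAddCyclic.card_addOrderOf_eq_totient dvd_rfl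

theorem card_addOrderOf_eq_card_cyclic_mul_totient (k : ℕ) :
    Nat.card {v : A // addOrderOf v = k}
      = Nat.card {H : AddSubgroup A // (∃ v, H = zmultiples v) ∧ Nat.card H = k} * φ k := by
  let S := {H : AddSubgroup A // (∃ v, H = zmultiples v) ∧ Nat.card H = k}
  have : Fintype S := Fintype.ofFinite S
  let f : {v : A // addOrderOf v = k} → S := fun v =>
    ⟨zmultiples v.1, ⟨v.1, rfl⟩, by rw [Nat.card_zmultiples, v.2]⟩
  have hfiber : ∀ H : S, Nat.card {v // f v = H} = φ k := by
    rintro ⟨_, ⟨v, rfl⟩, hk⟩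
    let e : {t // f t = ⟨zmultiples v, ⟨v, rfl⟩, hk⟩} ≃
        {g : A // zmultiples g = zmultiples v} :=
      { toFun := fun t => ⟨t.1.1, congrArg Subtype.val t.2⟩
        invFun := fun g => ⟨⟨g.1, by rw [← Nat.card_zmultiples, g.2, hk]⟩, Subtype.ext g.2⟩
        left_inv := fun _ => rfl
        right_inv := fun _ => rfl }
    rw [Nat.card_congr e, card_generators_eq_totient, hk]
  rw [← Nat.card_congr (Equiv.sigmaFiberEquiv f), Nat.card_sigma,
    sum_congr rfl fun H _ => hfiber H, sum_const, card_univ, smul_eq_mul,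
    Nat.card_eq_fintype_card]

end CyclicSubgroups

theorem count_cyclic_subgroups_rank_two (k : ℕ) (hk : 0 < k) :
    (Nat.card {H : AddSubgroup (ZMod k × ZMod k) //
        (∃ v : ZMod k × ZMod k, H = AddSubgroup.zmultiples v) ∧ Nat.card H = k} : ℚ)
      = (k : ℚ) * ∏ p ∈ k.primeFactors, (1 + 1 / (p : ℚ)) := by
  have : NeZero k := ⟨hk.ne'⟩
  have hφ : (φ k : ℚ) ≠ 0 := by exact_mod_cast (Nat.totient_pos.mpr hk).ne'
  have hcount := card_addOrderOf_eq_card_cyclic_mul_totient (A := ZMod k × ZMod k) k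
  rw [Nat.card_eq_fintype_card, Fintype.card_subtype] at hcount
  have horder := IsAddCyclic.card_prod_addOrderOf_eq_card (G := ZMod k)
  rw [ZMod.card] at horder
  apply mul_right_cancel₀ hφ
  rw [← Nat.cast_mul, ← hcount, horder, mul_comm _ (φ k : ℚ), Nat.totient_mul_dedekindPsi]
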